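/- arXiv:1306.2253 — 2 statements merged into one kernel-verified Lean document; each statement's English description precedes it below -/
import Mathlib

section
/- Let j > 0 and let β be a complex number with Re β > 0. Then |tanh(β·j)| < tanh(j) if and only if cosh(2·j·Re β)/cosh(2·j) < cos(2·j·Im β). -/
/-!
Writing `β j = x + i y`, one has
`|tanh (x + i y)|² = (cosh 2x - cos 2y) / (cosh 2x + cos 2y)`, and
`tanh² j` is the case `y = 0`. After squaring and cross-multiplying, the products
`cosh 2x · cosh 2j` cancel and what remains is `cosh 2x < cos 2y · cosh 2j`.
-/

namespace Complex

theorem normSq_cosh_add_mul_I (x y : ℝ) :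
    normSq (cosh (x + y * I)) = (Real.cosh (2 * x) + Real.cos (2 * y)) / 2 := by
  rw [cosh_add, cosh_mul_I, sinh_mul_I, ← ofReal_cosh, ← ofReal_sinh, ← ofReal_cos, ← ofReal_sin,
    ← mul_assoc, ← ofReal_mul, ← ofReal_mul, normSq_add_mul_I, Real.cosh_two_mul,
    Real.cos_two_mul]
  linear_combination (Real.cos y ^ 2 - 1 / 2) * Real.cosh_sq x +
    Real.sinh x ^ 2 * Real.sin_sq_add_cos_sq y

theorem normSq_sinh_add_mul_I (x y : ℝ) :
    normSq (sinh (x + y * I)) = (Real.cosh (2 * x) - Real.cos (2 * y)) / 2 := by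
  rw [sinh_add, cosh_mul_I, sinh_mul_I, ← ofReal_cosh, ← ofReal_sinh, ← ofReal_cos, ← ofReal_sin,
    ← mul_assoc, ← ofReal_mul, ← ofReal_mul, normSq_add_mul_I, Real.cosh_two_mul,
    Real.cos_two_mul]
  linear_combination (Real.sin y ^ 2 - 1 / 2) * Real.cosh_sq x +
    (Real.sinh x ^ 2 + 1) * Real.sin_sq_add_cos_sq y

-- Also where `cosh (x + y * I) = 0`: both sides are then `0`, by `z / 0 = 0`.
theorem normSq_tanh_add_mul_I (x y : ℝ) :
    normSq (tanh (x + y * I)) =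
      (Real.cosh (2 * x) - Real.cos (2 * y)) / (Real.cosh (2 * x) + Real.cos (2 * y)) := by
  rw [tanh_eq_sinh_div_cosh, map_div₀, normSq_sinh_add_mul_I, normSq_cosh_add_mul_I,
    div_div_div_cancel_right₀ two_ne_zero]

end Complex

namespace Real

theorem tanh_sq_eq_cosh_two_mul (x : ℝ) :
    tanh x ^ 2 = (cosh (2 * x) - 1) / (cosh (2 * x) + 1) := by
  simpa [← Complex.ofReal_tanh, sq] using Complex.normSq_tanh_add_mul_I x 0

theorem tanh_nonneg {x : ℝ} (hx : 0 ≤ x) : 0 ≤ tanh x := by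
  rw [tanh_eq_sinh_div_cosh]
  exact div_nonneg (sinh_nonneg_iff.mpr hx) (cosh_pos x).le

theorem cosh_add_cos_pos {x : ℝ} (hx : x ≠ 0) (y : ℝ) : 0 < cosh x + cos y := by
  linarith [one_lt_cosh.mpr hx, neg_one_le_cos y]

end Real

theorem sub_div_add_lt_sub_one_div_add_one_iff {K : Type*} [Field K] [LinearOrder K]
    [IsStrictOrderedRing K] {a b c : K} (hac : 0 < a + c) (hb : 0 < b) :
    (a - c) / (a + c) < (b - 1) / (b + 1) ↔ a / b < c := by
  rw [div_lt_div_iff₀ hac (by linarith), div_lt_iff₀ hb]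
  constructor <;> intro h <;> linarith

theorem abs_tanh_lt_tanh_iff (j : ℝ) (hj : 0 < j) (β : ℂ) (hβ : 0 < β.re) :
    ‖Complex.tanh (β * j)‖ < Real.tanh j ↔
      Real.cosh (2 * j * β.re) / Real.cosh (2 * j) < Real.cos (2 * j * β.im) := by
  have hβj : β * j = ↑(j * β.re) + ↑(j * β.im) * Complex.I := by
    apply Complex.ext <;> simp [mul_comm]
  rw [← sq_lt_sq₀ (norm_nonneg _) (Real.tanh_nonneg hj.le), Complex.sq_norm, hβj,
    Complex.normSq_tanh_add_mul_I, Real.tanh_sq_eq_cosh_two_mul, ← mul_assoc, ← mul_assoc]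
  exact sub_div_add_lt_sub_one_div_add_one_iff
    (Real.cosh_add_cos_pos (mul_pos (mul_pos two_pos hj) hβ).ne' _) (Real.cosh_pos _)
end

section
/- Let 0 < m ≤ M and let β be a complex number with 0 < Re β < 1, 2·M·|Im β| < π/2, and cosh(2·m·Re β)/cosh(2·m) < cos(2·M·Im β). Then for every j with m ≤ j ≤ M, cosh(2·j·Re β)/cosh(2·j) < cos(2·j·Im β). -/
/-!
For `|a| ≤ 1` the quotient `cosh (j a) / cosh j` decreases in `j ≥ 0`, while `cos (j b)` decreases
on `0 ≤ j ≤ π / |b|`. So on `[m, M]` the left side is largest at `j = m` and the right side is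
smallest at `j = M`, and the inequality at these two endpoints gives it everywhere.
-/

open Real Set

lemma cosh_mul_mul_cosh_le {a x y : ℝ} (ha : |a| ≤ 1) (hx : 0 ≤ x) (hxy : x ≤ y) :
    cosh (y * a) * cosh x ≤ cosh (x * a) * cosh y := by
  obtain ⟨ha₁, ha₂⟩ := abs_le.mp ha
  -- `2 cosh u cosh v = cosh (v + u) + cosh (v - u)`, and `cosh` is monotone in `|·|`.
  have two_mul_cosh_mul_cosh (u v : ℝ) : 2 * (cosh u * cosh v) = cosh (v + u) + cosh (v - u) := by
    rw [cosh_add, cosh_sub]; ring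
  have hplus : cosh (x + y * a) ≤ cosh (y + x * a) :=
    cosh_le_cosh.mpr (abs_le_abs (by nlinarith) (by nlinarith))
  have hminus : cosh (x - y * a) ≤ cosh (y - x * a) :=
    cosh_le_cosh.mpr (abs_le_abs (by nlinarith) (by nlinarith))
  have := two_mul_cosh_mul_cosh (y * a) x
  have := two_mul_cosh_mul_cosh (x * a) y
  linarith

lemma antitoneOn_cosh_mul_div_cosh {a : ℝ} (ha : |a| ≤ 1) :
    AntitoneOn (fun x => cosh (x * a) / cosh x) (Ici 0) := by
  intro x hx y _ hxy
  rw [div_le_div_iff₀ (cosh_pos y) (cosh_pos x)]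
  exact cosh_mul_mul_cosh_le ha hx hxy

lemma cos_mul_le_cos_mul {b x y : ℝ} (hx : 0 ≤ x) (hxy : x ≤ y) (hy : y * |b| ≤ π) :
    cos (y * b) ≤ cos (x * b) := by
  rw [← cos_abs (y * b), ← cos_abs (x * b), abs_mul, abs_mul, abs_of_nonneg hx,
    abs_of_nonneg (hx.trans hxy)]
  exact cos_le_cos_of_nonneg_of_le_pi (by positivity) hy
    (mul_le_mul_of_nonneg_right hxy (abs_nonneg b))

theorem cosh_cos_ineq_of_endpoints_general (m M : ℝ) (hm : 0 < m) (β : ℂ)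
    (hre0 : 0 < β.re) (hre1 : β.re < 1)
    (him : 2 * M * |β.im| < Real.pi / 2)
    (hend : Real.cosh (2 * m * β.re) / Real.cosh (2 * m) < Real.cos (2 * M * β.im)) :
    ∀ j : ℝ, m ≤ j → j ≤ M →
      Real.cosh (2 * j * β.re) / Real.cosh (2 * j) < Real.cos (2 * j * β.im) := by
  intro j hmj hjM
  have hre : |β.re| ≤ 1 := abs_le.mpr ⟨by linarith, hre1.le⟩
  have hcosh : cosh (2 * j * β.re) / cosh (2 * j) ≤ cosh (2 * m * β.re) / cosh (2 * m) :=
    antitoneOn_cosh_mul_div_cosh hre (mem_Ici.mpr (by linarith)) (mem_Ici.mpr (by linarith))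
      (by linarith)
  have hcos : cos (2 * M * β.im) ≤ cos (2 * j * β.im) :=
    cos_mul_le_cos_mul (by linarith) (by linarith) (by linarith [pi_pos])
  exact hcosh.trans_lt (hend.trans_le hcos)

theorem cosh_cos_ineq_of_endpoints (m M : ℝ) (hm : 0 < m) (hmM : m ≤ M) (β : ℂ)
    (hre0 : 0 < β.re) (hre1 : β.re < 1)
    (him : 2 * M * |β.im| < Real.pi / 2)
    (hend : Real.cosh (2 * m * β.re) / Real.cosh (2 * m) < Real.cos (2 * M * β.im)) :
    ∀ j : ℝ, m ≤ j → j ≤ M →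
      Real.cosh (2 * j * β.re) / Real.cosh (2 * j) < Real.cos (2 * j * β.im) :=
  cosh_cos_ineq_of_endpoints_general m M hm β hre0 hre1 him hend
end
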